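/- Let V be a real normed vector space, K ≥ 1, and N ≥ 1. Let f_1, …, f_N : V → ℝ be functions such that each f_j is L_j-Lipschitz with L_j ≥ 0, and set L = (1/N)·Σ_{j=1}^N L_j. Let θ^train : Δ^K → V be an arbitrary map, let θ_0, …, θ_K ∈ V and θ'_0, …, θ'_K ∈ V, and for α in the standard simplex Δ^K ⊂ ℝ^{K+1} define θ^M(α) = Σ_{i=0}^K α_i·θ_i, θ̂(α) = Σ_{i=0}^K α_i·θ'_i, F(α) = (1/N)·Σ_{j=1}^N f_j(θ^train(α)), F̂(α) = (1/N)·Σ_{j=1}^N f_j(θ̂(α)). Let R : Δ^K → ℝ be any function, and set J(α) = F(α) + R(α) and Ĵ(α) = F̂(α) + R(α). Suppose δ_LMC ≥ 0 satisfies ‖θ^train(α) − θ^M(α)‖ ≤ δ_LMC for all α ∈ Δ^K, set Δ_LoRA = max_{0 ≤ i ≤ K} ‖θ_i − θ'_i‖, and suppose α* ∈ Δ^K globally minimizes J over Δ^K and α̂ ∈ Δ^K globally minimizes Ĵ over Δ^K. Then J(α̂) − J(α*) ≤ 2·L·(δ_LMC + Δ_LoRA). -/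

import Mathlib

open Finset

/-! The bound comes from the uniform estimate `|J - Ĵ| ≤ L (δ_LMC + Δ_LoRA)` on the simplex:
`θ̂(α)` is within `Δ_LoRA` of `θ^M(α)`, since a convex combination moves by at most the
largest move of its points, and `θ^M(α)` is within `δ_LMC` of `θ^train(α)`; averaging the
Lipschitz metrics turns this into a gap in `F`. Minimizing the perturbed objective `Ĵ` instead
of `J` then costs at most twice the uniform gap. -/

lemma norm_sum_smul_sub_sum_smul_le_of_mem_stdSimplex {ι E : Type*} [Fintype ι]
    [SeminormedAddCommGroup E] [NormedSpace ℝ E] {α : ι → ℝ} (hα : α ∈ stdSimplex ℝ ι)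
    {x y : ι → E} {D : ℝ} (hD : ∀ i, ‖x i - y i‖ ≤ D) :
    ‖∑ i, α i • x i - ∑ i, α i • y i‖ ≤ D :=
  calc ‖∑ i, α i • x i - ∑ i, α i • y i‖ = ‖∑ i, α i • (x i - y i)‖ := by
        simp only [smul_sub, sum_sub_distrib]
    _ ≤ ∑ i, ‖α i • (x i - y i)‖ := norm_sum_le _ _
    _ = ∑ i, α i * ‖x i - y i‖ := by
        simp only [norm_smul, Real.norm_of_nonneg (hα.1 _)]
    _ ≤ ∑ i, α i * D := sum_le_sum fun i _ => mul_le_mul_of_nonneg_left (hD i) (hα.1 i)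
    _ = D := by rw [← sum_mul, hα.2, one_mul]

lemma abs_sum_sub_sum_le_of_abs_sub_le {ι E : Type*} [Fintype ι] [SeminormedAddCommGroup E]
    {f : ι → E → ℝ} {C : ι → ℝ} (hC : ∀ j, 0 ≤ C j)
    (hf : ∀ j, ∀ x y : E, |f j x - f j y| ≤ C j * ‖x - y‖) {x y : E} {d : ℝ}
    (hxy : ‖x - y‖ ≤ d) :
    |∑ j, f j x - ∑ j, f j y| ≤ (∑ j, C j) * d :=
  calc |∑ j, f j x - ∑ j, f j y| = |∑ j, (f j x - f j y)| := by rw [sum_sub_distrib]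
    _ ≤ ∑ j, |f j x - f j y| := abs_sum_le_sum_abs _ _
    _ ≤ ∑ j, C j * d := sum_le_sum fun j _ =>
        (hf j x y).trans (mul_le_mul_of_nonneg_left hxy (hC j))
    _ = (∑ j, C j) * d := (sum_mul _ _ _).symm

lemma sub_le_two_mul_of_isMinOn_of_abs_sub_le {α : Type*} {f g : α → ℝ} {s : Set α}
    {a b : α} {ε : ℝ} (hb : IsMinOn g s b) (ha : a ∈ s) (hεa : |f a - g a| ≤ ε)
    (hεb : |f b - g b| ≤ ε) :
    f b - f a ≤ 2 * ε := by
  have hba : g b ≤ g a := hb ha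
  linarith [abs_le.1 hεa, abs_le.1 hεb]

theorem opmix_composite_bound_general
    (V : Type*) [NormedAddCommGroup V] [NormedSpace ℝ V]
    (K N : ℕ)
    (θtrain : (Fin (K + 1) → ℝ) → V)
    (θ θ' : Fin (K + 1) → V)
    (f : Fin N → V → ℝ) (Lc : Fin N → ℝ) (hLc : ∀ j, 0 ≤ Lc j)
    (hLip : ∀ j, ∀ x y : V, |f j x - f j y| ≤ Lc j * ‖x - y‖)
    (L : ℝ) (hL : L = (1 / (N : ℝ)) * ∑ j, Lc j)
    (F Fhat : (Fin (K + 1) → ℝ) → ℝ)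
    (hF : ∀ α, F α = (1 / (N : ℝ)) * ∑ j, f j (θtrain α))
    (hFhat : ∀ α, Fhat α = (1 / (N : ℝ)) * ∑ j, f j (∑ i, α i • θ' i))
    (R : (Fin (K + 1) → ℝ) → ℝ)
    (J Jhat : (Fin (K + 1) → ℝ) → ℝ)
    (hJ : ∀ α, J α = F α + R α)
    (hJhat : ∀ α, Jhat α = Fhat α + R α)
    (δLMC : ℝ)
    (hgap : ∀ α ∈ stdSimplex ℝ (Fin (K + 1)), ‖θtrain α - ∑ i, α i • θ i‖ ≤ δLMC)
    (ΔLoRA : ℝ)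
    (hΔ : ΔLoRA = Finset.univ.sup' Finset.univ_nonempty (fun i => ‖θ i - θ' i‖))
    (αstar αhat : Fin (K + 1) → ℝ)
    (hαstar : αstar ∈ stdSimplex ℝ (Fin (K + 1)))
    (hαhat : αhat ∈ stdSimplex ℝ (Fin (K + 1)))
    (hminhat : ∀ α ∈ stdSimplex ℝ (Fin (K + 1)), Jhat αhat ≤ Jhat α) :
    J αhat - J αstar ≤ 2 * L * (δLMC + ΔLoRA) := by
  have hθ : ∀ i, ‖θ i - θ' i‖ ≤ ΔLoRA := fun i =>
    hΔ ▸ le_sup' (fun i => ‖θ i - θ' i‖) (mem_univ i)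
  have hdist : ∀ α ∈ stdSimplex ℝ (Fin (K + 1)),
      ‖θtrain α - ∑ i, α i • θ' i‖ ≤ δLMC + ΔLoRA := fun α hα =>
    (norm_sub_le_norm_sub_add_norm_sub _ _ _).trans
      (add_le_add (hgap α hα) (norm_sum_smul_sub_sum_smul_le_of_mem_stdSimplex hα hθ))
  have hJgap : ∀ α ∈ stdSimplex ℝ (Fin (K + 1)),
      |J α - Jhat α| ≤ L * (δLMC + ΔLoRA) := fun α hα =>
    calc |J α - Jhat α| = 1 / (N : ℝ) * |∑ j, f j (θtrain α) - ∑ j, f j (∑ i, α i • θ' i)| := by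
          rw [hJ, hJhat, hF, hFhat, add_sub_add_right_eq_sub, ← mul_sub, abs_mul,
            abs_of_nonneg (by positivity)]
      _ ≤ 1 / (N : ℝ) * ((∑ j, Lc j) * (δLMC + ΔLoRA)) := by
          gcongr
          exact abs_sum_sub_sum_le_of_abs_sub_le hLc hLip (hdist α hα)
      _ = L * (δLMC + ΔLoRA) := by rw [hL, mul_assoc]
  rw [mul_assoc]
  exact sub_le_two_mul_of_isMinOn_of_abs_sub_le (isMinOn_iff.2 hminhat) hαstar
    (hJgap αstar hαstar) (hJgap αhat hαhat)

/-- **Composite OP-Mix suboptimality bound.**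
Combining the performance gap theorem with the LoRA and merging approximation bounds:
with `L = (1/N) ∑ j, Lc j`, linearity gap `δ_LMC`, LoRA gap `Δ_LoRA = max_i ‖θ i − θ' i‖`,
`J = F + R` minimized at `α*` and `Ĵ = F̂ + R` minimized at `α̂` over the standard simplex,
we have `J(α̂) − J(α*) ≤ 2 L (δ_LMC + Δ_LoRA)`. -/
theorem opmix_composite_bound
    (V : Type*) [NormedAddCommGroup V] [NormedSpace ℝ V]
    (K N : ℕ) (hK : 1 ≤ K) (hN : 1 ≤ N)
    (θtrain : (Fin (K + 1) → ℝ) → V)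
    (θ θ' : Fin (K + 1) → V)
    (f : Fin N → V → ℝ) (Lc : Fin N → ℝ) (hLc : ∀ j, 0 ≤ Lc j)
    (hLip : ∀ j, ∀ x y : V, |f j x - f j y| ≤ Lc j * ‖x - y‖)
    (L : ℝ) (hL : L = (1 / (N : ℝ)) * ∑ j, Lc j)
    (F Fhat : (Fin (K + 1) → ℝ) → ℝ)
    (hF : ∀ α, F α = (1 / (N : ℝ)) * ∑ j, f j (θtrain α))
    (hFhat : ∀ α, Fhat α = (1 / (N : ℝ)) * ∑ j, f j (∑ i, α i • θ' i))
    (R : (Fin (K + 1) → ℝ) → ℝ)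
    (J Jhat : (Fin (K + 1) → ℝ) → ℝ)
    (hJ : ∀ α, J α = F α + R α)
    (hJhat : ∀ α, Jhat α = Fhat α + R α)
    (δLMC : ℝ) (hδ : 0 ≤ δLMC)
    (hgap : ∀ α ∈ stdSimplex ℝ (Fin (K + 1)), ‖θtrain α - ∑ i, α i • θ i‖ ≤ δLMC)
    (ΔLoRA : ℝ)
    (hΔ : ΔLoRA = Finset.univ.sup' Finset.univ_nonempty (fun i => ‖θ i - θ' i‖))
    (αstar αhat : Fin (K + 1) → ℝ)
    (hαstar : αstar ∈ stdSimplex ℝ (Fin (K + 1)))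
    (hαhat : αhat ∈ stdSimplex ℝ (Fin (K + 1)))
    (hmin : ∀ α ∈ stdSimplex ℝ (Fin (K + 1)), J αstar ≤ J α)
    (hminhat : ∀ α ∈ stdSimplex ℝ (Fin (K + 1)), Jhat αhat ≤ Jhat α) :
    J αhat - J αstar ≤ 2 * L * (δLMC + ΔLoRA) :=
  opmix_composite_bound_general V K N θtrain θ θ' f Lc hLc hLip L hL F Fhat hF hFhat R J Jhat hJ
    hJhat δLMC hgap ΔLoRA hΔ αstar αhat hαstar hαhat hminhat
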